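/- Let φ be an E3-CNF formula with m clauses C_1, …, C_m over variables x_1, …, x_n, let y, z_1, z_2 be fresh variables, and let m_1, m_2 ≥ 1 be integers. Let ψ be the CNF formula (with clauses of width 3 or 4) consisting of the clauses C_j ∨ y for every j ∈ [m], together with m_1 copies of ¬y ∨ z_1 ∨ ¬z_2 and m_2 copies of ¬y ∨ ¬z_1 ∨ z_2. Let α_start assign 1 to all of x_1,…,x_n and (y,z_1,z_2) = (1,1,1), and let α_end assign 0 to all of x_1,…,x_n and (y,z_1,z_2) = (1,0,0). Then α_start and α_end satisfy ψ, and if φ is satisfiable then opt_ψ(α_start ↔ α_end) = 1. -/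

import Mathlib

/-! With `y = 1` and `z₁ = z₂` every clause of `ψ` is satisfied whatever `x` is, and with `y = 0`
it suffices that `x` satisfies `φ`. Given a satisfying assignment `α` of `φ`, walk from `αs` by
flipping `x` to `α`, then moving `(y, z₁, z₂)` through `(0,1,1), (0,0,1), (0,0,0), (1,0,0)`, and
finally flipping `x` to all zeros: every assignment on the way satisfies `ψ`, so this sequence
has the largest possible value `1`. -/

/-- An assignment maps each Boolean variable to a truth value. -/
abbrev Assignment (V : Type) := V → Bool

/-- A literal is a variable together with a polarity (`true` = positive);
a clause is a disjunction of literals, represented as the list of its literals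
(its width is the length of this list). -/
abbrev Clause (V : Type) := List (V × Bool)

/-- A CNF formula is a conjunction of clauses, represented as a list
(clauses are counted with multiplicity). -/
abbrev CNF (V : Type) := List (Clause V)

/-- An assignment satisfies a clause if it makes at least one literal true. -/
def satClause {V : Type} (α : Assignment V) (C : Clause V) : Bool :=
  C.any fun l => α l.1 == l.2

/-- An assignment satisfies a CNF formula if it satisfies every clause. -/
def satCNF {V : Type} (α : Assignment V) (φ : CNF V) : Bool :=
  φ.all fun C => satClause α C

/-- The fraction of clauses of `φ` satisfied by `α`. -/
noncomputable def val {V : Type} (φ : CNF V) (α : Assignment V) : ℝ :=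
  ((φ.filter fun C => satClause α C).length : ℝ) / (φ.length : ℝ)

/-- The number of clauses of `φ` violated by `α`. -/
def numViol {V : Type} (φ : CNF V) (α : Assignment V) : ℕ :=
  (φ.filter fun C => !satClause α C).length

/-- Two assignments differ on at most one variable. -/
def Adjacent {V : Type} (α β : Assignment V) : Prop :=
  ∀ v w, α v ≠ β v → α w ≠ β w → v = w

/-- `seq` is a reconfiguration sequence from `s` to `e`: a nonempty finite sequence of
assignments starting at `s`, ending at `e`, in which consecutive assignments differ
on at most one variable. -/
def IsReconfSeq {V : Type} (s e : Assignment V) (seq : List (Assignment V)) : Prop :=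
  seq ≠ [] ∧ seq.head? = some s ∧ seq.getLast? = some e ∧ seq.Chain' Adjacent

/-- The value of a reconfiguration sequence: the minimum of `val φ` over its members. -/
noncomputable def seqVal {V : Type} (φ : CNF V) (seq : List (Assignment V)) : ℝ :=
  sInf (val φ '' {α | α ∈ seq})

/-- `opt_φ(s ↔ e)`: the optimal (maximum) value over all reconfiguration
sequences from `s` to `e`. -/
noncomputable def optVal {V : Type} (φ : CNF V) (s e : Assignment V) : ℝ :=
  sSup (seqVal φ '' {seq | IsReconfSeq s e seq})

open Relation

section Reconfiguration

variable {V : Type}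

lemma val_nonneg (φ : CNF V) (α : Assignment V) : 0 ≤ val φ α := by
  unfold val; positivity

lemma val_le_one (φ : CNF V) (α : Assignment V) : val φ α ≤ 1 :=
  div_le_one_of_le₀ (by exact_mod_cast List.length_filter_le _ _) (Nat.cast_nonneg _)

lemma val_eq_one_of_satCNF {φ : CNF V} {α : Assignment V} (hφ : φ ≠ [])
    (h : satCNF α φ = true) : val φ α = 1 := by
  have hall : ∀ C ∈ φ, satClause α C = true := by simpa [satCNF] using h
  rw [val, List.filter_eq_self.mpr hall]
  exact div_self (by exact_mod_cast (List.length_pos_iff.mpr hφ).ne')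

lemma seqVal_le_one (φ : CNF V) {seq : List (Assignment V)} (hseq : seq ≠ []) :
    seqVal φ seq ≤ 1 := by
  obtain ⟨α, hα⟩ := List.exists_mem_of_ne_nil seq hseq
  refine csInf_le_of_le ⟨0, ?_⟩ ⟨α, hα, rfl⟩ (val_le_one φ α)
  rintro _ ⟨β, -, rfl⟩
  exact val_nonneg φ β

lemma seqVal_eq_one {φ : CNF V} {seq : List (Assignment V)} (hseq : seq ≠ [])
    (h : ∀ α ∈ seq, val φ α = 1) : seqVal φ seq = 1 := by
  obtain ⟨α, hα⟩ := List.exists_mem_of_ne_nil seq hseq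
  rw [seqVal, Set.EqOn.image_eq (s := {α | α ∈ seq}) (f₂ := fun _ => 1) h,
    Set.Nonempty.image_const ⟨α, hα⟩, csInf_singleton]

lemma adjacent_update [DecidableEq V] (α : Assignment V) (a : V) (b : Bool) :
    Adjacent α (Function.update α a b) := by
  have key : ∀ v, α v ≠ Function.update α a b v → v = a := fun v hv =>
    by_contra fun hva => hv (Function.update_of_ne hva _ _).symm
  intro v w hv hw
  rw [key v hv, key w hw]

lemma reflTransGen_adjacent [Finite V] (α β : Assignment V) : ReflTransGen Adjacent α β := by
  classical
  have : Fintype V := Fintype.ofFinite V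
  suffices h : ∀ s : Finset V, ∀ α, (∀ v ∉ s, α v = β v) → ReflTransGen Adjacent α β from
    h Finset.univ α (by simp)
  intro s
  induction s using Finset.induction_on with
  | empty => intro α hα; exact (funext fun v => hα v (Finset.notMem_empty v)) ▸ .refl
  | insert a s _ ih =>
    intro α hα
    refine .head (adjacent_update α a (β a)) (ih _ fun v hv => ?_)
    by_cases hva : v = a
    · rw [hva, Function.update_self]
    · rw [Function.update_of_ne hva]
      exact hα v (by simp [hva, hv])

lemma Adjacent.sumElim_left {X Y : Type} {f g : X → Bool} (h : Adjacent f g) (t : Y → Bool) :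
    Adjacent (Sum.elim f t) (Sum.elim g t) := by
  rintro (v | v) (w | w) hv hw
  · exact congrArg _ (h v w hv hw)
  · simp at hw
  · simp at hv
  · simp at hv

lemma Adjacent.sumElim_right {X Y : Type} (f : X → Bool) {t t' : Y → Bool} (h : Adjacent t t') :
    Adjacent (Sum.elim f t) (Sum.elim f t') := by
  rintro (v | v) (w | w) hv hw
  · simp at hv
  · simp at hv
  · simp at hw
  · exact congrArg _ (h v w hv hw)

lemma exists_isReconfSeq_of_reflTransGen {P : Assignment V → Prop} {s e : Assignment V}
    (hs : P s) (h : ReflTransGen (fun α β => Adjacent α β ∧ P β) s e) :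
    ∃ seq, IsReconfSeq s e seq ∧ ∀ α ∈ seq, P α := by
  induction h with
  | refl =>
    exact ⟨[s], ⟨List.cons_ne_nil _ _, rfl, rfl, List.isChain_singleton _⟩, by simpa using hs⟩
  | @tail b c _ hbc ih =>
    obtain ⟨seq, ⟨hne, hhead, hlast, hchain⟩, hP⟩ := ih
    refine ⟨seq ++ [c], ⟨by simp, by simp [List.head?_append, hhead], by simp, ?_⟩, ?_⟩
    · exact hchain.append (List.isChain_singleton _) (by simpa [hlast] using hbc.1)
    · simpa [or_imp, forall_and] using ⟨hP, hbc.2⟩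

lemma optVal_eq_one_of_reflTransGen {ψ : CNF V} {s e : Assignment V} (hψ : ψ ≠ [])
    (hs : satCNF s ψ) (h : ReflTransGen (fun α β => Adjacent α β ∧ satCNF β ψ) s e) :
    optVal ψ s e = 1 := by
  obtain ⟨seq, hseq, hsat⟩ := exists_isReconfSeq_of_reflTransGen (P := (satCNF · ψ)) hs h
  refine IsGreatest.csSup_eq ⟨⟨seq, hseq, seqVal_eq_one hseq.1 fun α hα =>
    val_eq_one_of_satCNF hψ (hsat α hα)⟩, ?_⟩
  rintro _ ⟨seq', hseq', rfl⟩
  exact seqVal_le_one ψ hseq'.1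

lemma reflTransGen_sumElim_left {X Y : Type} [Finite X] {P : Assignment (X ⊕ Y) → Prop}
    {t : Y → Bool} (hP : ∀ f, P (Sum.elim f t)) (f g : X → Bool) :
    ReflTransGen (fun α β => Adjacent α β ∧ P β) (Sum.elim f t) (Sum.elim g t) :=
  (reflTransGen_adjacent f g).lift (fun h => Sum.elim h t) fun _ _ hab =>
    ⟨hab.sumElim_left t, hP _⟩

end Reconfiguration

/-- The variables `y`, `z₁`, `z₂` are `Sum.inr 0`, `Sum.inr 1`, `Sum.inr 2`. -/
def reductionCNF {n : ℕ} (φ : CNF (Fin n)) (m₁ m₂ : ℕ) : CNF (Fin n ⊕ Fin 3) :=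
  (φ.map fun C => C.map (fun l => (Sum.inl l.1, l.2)) ++ [(Sum.inr 0, true)])
    ++ List.replicate m₁ [(Sum.inr 0, false), (Sum.inr 1, true), (Sum.inr 2, false)]
    ++ List.replicate m₂ [(Sum.inr 0, false), (Sum.inr 1, false), (Sum.inr 2, true)]

section Reduction

variable {n : ℕ} (φ : CNF (Fin n)) (m₁ m₂ : ℕ)

lemma satCNF_reductionCNF_of_y {β : Assignment (Fin n ⊕ Fin 3)} (hy : β (Sum.inr 0) = true)
    (hz : β (Sum.inr 1) = β (Sum.inr 2)) : satCNF β (reductionCNF φ m₁ m₂) := by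
  cases h : β (Sum.inr 1) <;> simp_all [reductionCNF, satCNF, satClause]

lemma satCNF_reductionCNF_of_not_y {β : Assignment (Fin n ⊕ Fin 3)} (hy : β (Sum.inr 0) = false)
    (hx : satCNF (β ∘ Sum.inl) φ) : satCNF β (reductionCNF φ m₁ m₂) := by
  simp_all [reductionCNF, satCNF, satClause]

end Reduction

theorem stmt13_general {n : ℕ} (φ : CNF (Fin n))
    (m₁ m₂ : ℕ) (hm₁ : 1 ≤ m₁)
    (ψ : CNF (Fin n ⊕ Fin 3))
    (hψ : ψ = (φ.map fun C => C.map (fun l => (Sum.inl l.1, l.2)) ++ [(Sum.inr 0, true)])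
        ++ List.replicate m₁ [(Sum.inr 0, false), (Sum.inr 1, true), (Sum.inr 2, false)]
        ++ List.replicate m₂ [(Sum.inr 0, false), (Sum.inr 1, false), (Sum.inr 2, true)])
    (αs αe : Assignment (Fin n ⊕ Fin 3))
    (hαs : αs = fun _ => true)
    (hαe : αe = Sum.elim (fun _ => false) fun i => i == 0) :
    satCNF αs ψ ∧ satCNF αe ψ ∧ ((∃ α, satCNF α φ) → optVal ψ αs αe = 1) := by
  change ψ = reductionCNF φ m₁ m₂ at hψ
  subst hαs hαe
  have sat_of_y {β : Assignment (Fin n ⊕ Fin 3)} (hy : β (Sum.inr 0) = true)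
      (hz : β (Sum.inr 1) = β (Sum.inr 2)) : satCNF β ψ :=
    hψ ▸ satCNF_reductionCNF_of_y φ m₁ m₂ hy hz
  refine ⟨sat_of_y rfl rfl, sat_of_y rfl rfl, ?_⟩
  rintro ⟨α, hα⟩
  have sat_of_not_y (t : Fin 3 → Bool) (ht : t 0 = false) : satCNF (Sum.elim α t) ψ :=
    hψ ▸ satCNF_reductionCNF_of_not_y φ m₁ m₂ ht hα
  have hne : ψ ≠ [] :=
    List.ne_nil_of_mem (a := [(Sum.inr 0, false), (Sum.inr 1, true), (Sum.inr 2, false)])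
      (by simp [hψ, reductionCNF]; omega)
  have adj (t t' : Fin 3 → Bool) (h : Adjacent t t') := h.sumElim_right α
  have phase₁ := reflTransGen_sumElim_left (P := (satCNF · ψ)) (t := fun _ => true)
    (fun _ => sat_of_y rfl rfl) (fun _ => true) α
  have phase₂ := reflTransGen_sumElim_left (P := (satCNF · ψ)) (t := fun i => i == 0)
    (fun _ => sat_of_y rfl rfl) α (fun _ => false)
  refine optVal_eq_one_of_reflTransGen hne (sat_of_y rfl rfl) ?_
  rw [← Sum.elim_lam_const_lam_const]
  refine ((((phase₁.tail ⟨adj _ ![false, true, true] ?_, sat_of_not_y _ rfl⟩).tail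
    ⟨adj _ ![false, false, true] ?_, sat_of_not_y _ rfl⟩).tail
    ⟨adj _ ![false, false, false] ?_, sat_of_not_y _ rfl⟩).tail
    ⟨adj _ _ ?_, sat_of_y rfl rfl⟩).trans phase₂
  all_goals unfold Adjacent; decide

/-- Completeness of the reduction to `{3,4}`-SAT Reconfiguration: with
fresh variables `y = inr 0`, `z₁ = inr 1`, `z₂ = inr 2`, the formula `ψ` consists of the
clauses `C_j ∨ y` (for `j ∈ [m]`), `m₁ ≥ 1` copies of `¬y ∨ z₁ ∨ ¬z₂`, and `m₂ ≥ 1` copies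
of `¬y ∨ ¬z₁ ∨ z₂`; `αs` assigns `1` to every variable (so `(y,z₁,z₂) = (1,1,1)`), and `αe`
assigns `0` to every `xᵢ` and `(y,z₁,z₂) = (1,0,0)`. Then `αs` and `αe` satisfy `ψ`, and if
`φ` is satisfiable then `opt_ψ(αs ↔ αe) = 1`. -/
theorem stmt13 {n : ℕ} (φ : CNF (Fin n)) (h3 : ∀ C ∈ φ, C.length = 3)
    (m₁ m₂ : ℕ) (hm₁ : 1 ≤ m₁) (hm₂ : 1 ≤ m₂)
    (ψ : CNF (Fin n ⊕ Fin 3))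
    (hψ : ψ = (φ.map fun C => C.map (fun l => (Sum.inl l.1, l.2)) ++ [(Sum.inr 0, true)])
        ++ List.replicate m₁ [(Sum.inr 0, false), (Sum.inr 1, true), (Sum.inr 2, false)]
        ++ List.replicate m₂ [(Sum.inr 0, false), (Sum.inr 1, false), (Sum.inr 2, true)])
    (αs αe : Assignment (Fin n ⊕ Fin 3))
    (hαs : αs = fun _ => true)
    (hαe : αe = Sum.elim (fun _ => false) fun i => i == 0) :
    satCNF αs ψ ∧ satCNF αe ψ ∧ ((∃ α, satCNF α φ) → optVal ψ αs αe = 1) :=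
  stmt13_general φ m₁ m₂ hm₁ ψ hψ αs αe hαs hαe
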